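/- arXiv:math/0603716 — 4 statements merged into one kernel-verified Lean document; each statement's English description precedes it below -/
import Mathlib

section
/- Let A be an N×N real symmetric positive semi-definite matrix with eigenvalues β₁ ≥ ... ≥ β_N, let u_N be a unit eigenvector of A for β_N, and let y ≠ 0 be a real vector. Set y_N = u_Nᵀy, gap = β_{N-1} - β_N, and ξ = |y_N| + √(‖y‖² - y_N²). Then the smallest eigenvalue of A + yyᵀ satisfies λ_min(A + yyᵀ) ≥ max{β_N, y_N² · gap/(gap + ξ²)}. -/
open Matrix Finset

/-- Smallest eigenvalue of a Hermitian real matrix. -/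
noncomputable def smallestEig {n : ℕ} {M : Matrix (Fin n) (Fin n) ℝ}
    (hM : M.IsHermitian) : ℝ := ⨅ i, hM.eigenvalues i

section Aux

variable {n : ℕ} {A : Matrix (Fin n) (Fin n) ℝ}

lemma dot_eigen (hA : A.IsHermitian) (i j : Fin n) :
    (⇑(hA.eigenvectorBasis i)) ⬝ᵥ (⇑(hA.eigenvectorBasis j)) = if i = j then 1 else 0 := by
  have := orthonormal_iff_ite.mp hA.eigenvectorBasis.orthonormal i j
  rw [PiLp.inner_apply] at this
  simpa [dotProduct, mul_comm] using this

lemma sum_repr_dot (hA : A.IsHermitian) (x : Fin n → ℝ) :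
    ∑ i, ((⇑(hA.eigenvectorBasis i)) ⬝ᵥ x) • ⇑(hA.eigenvectorBasis i) = x := by
  have h := congrArg WithLp.ofLp (hA.eigenvectorBasis.sum_repr' (WithLp.toLp 2 x))
  have h2 : ∀ i, (inner (𝕜 := ℝ) (hA.eigenvectorBasis i) (WithLp.toLp 2 x)) = (⇑(hA.eigenvectorBasis i)) ⬝ᵥ x := by
    intro i; rw [PiLp.inner_apply]; simp [dotProduct, mul_comm]
  simp only [h2, WithLp.ofLp_sum, WithLp.ofLp_smul] at h
  exact h

lemma dot_sum_smul (x : Fin n → ℝ) (c : Fin n → ℝ) (v : Fin n → Fin n → ℝ) :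
    x ⬝ᵥ (∑ i, c i • v i) = ∑ i, c i * (x ⬝ᵥ v i) := by
  simp only [dotProduct, Finset.sum_apply, Pi.smul_apply, smul_eq_mul, Finset.mul_sum]
  rw [Finset.sum_comm]
  exact Finset.sum_congr rfl fun i _ => Finset.sum_congr rfl fun k _ => by ring

lemma parseval (hA : A.IsHermitian) (x z : Fin n → ℝ) :
    x ⬝ᵥ z = ∑ i, ((⇑(hA.eigenvectorBasis i)) ⬝ᵥ x) * ((⇑(hA.eigenvectorBasis i)) ⬝ᵥ z) := by
  conv_lhs => rw [← sum_repr_dot hA z]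
  rw [dot_sum_smul]
  refine Finset.sum_congr rfl fun i _ => ?_
  rw [dotProduct_comm x]
  ring

lemma quad_decomp (hA : A.IsHermitian) (x : Fin n → ℝ) :
    x ⬝ᵥ (A *ᵥ x) = ∑ i, hA.eigenvalues i * ((⇑(hA.eigenvectorBasis i)) ⬝ᵥ x) ^ 2 := by
  have hAx : A *ᵥ x = ∑ i, (((⇑(hA.eigenvectorBasis i)) ⬝ᵥ x) * hA.eigenvalues i) •
      ⇑(hA.eigenvectorBasis i) := by
    conv_lhs => rw [← sum_repr_dot hA x]
    rw [← Matrix.mulVecLin_apply, map_sum]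
    refine Finset.sum_congr rfl fun i _ => ?_
    rw [_root_.map_smul, Matrix.mulVecLin_apply, hA.mulVec_eigenvectorBasis, smul_smul]
  rw [hAx, dot_sum_smul]
  refine Finset.sum_congr rfl fun i _ => ?_
  rw [dotProduct_comm x]
  ring

lemma rank_one_quad (y x : Fin n → ℝ) :
    x ⬝ᵥ ((Matrix.vecMulVec y y) *ᵥ x) = (y ⬝ᵥ x) ^ 2 := by
  simp only [dotProduct, Matrix.mulVec, Matrix.vecMulVec_apply, dotProduct]
  calc ∑ k, x k * ∑ j, y k * y j * x j
      = ∑ k, (y k * x k) * (∑ j, y j * x j) := by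
        refine Finset.sum_congr rfl fun k _ => ?_
        rw [Finset.mul_sum, Finset.mul_sum]
        exact Finset.sum_congr rfl fun j _ => by ring
    _ = (∑ j, y j * x j) ^ 2 := by rw [← Finset.sum_mul]; ring

lemma smallestEig_ge {M : Matrix (Fin n) (Fin n) ℝ} (hM : M.IsHermitian) (hn : 0 < n) (c : ℝ)
    (h : ∀ x : Fin n → ℝ, x ⬝ᵥ x = 1 → c ≤ x ⬝ᵥ (M *ᵥ x)) : c ≤ smallestEig hM := by
  haveI : Nonempty (Fin n) := ⟨⟨0, hn⟩⟩
  refine le_ciInf fun i => ?_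
  have hv := hM.mulVec_eigenvectorBasis i
  have hvv : (⇑(hM.eigenvectorBasis i)) ⬝ᵥ (⇑(hM.eigenvectorBasis i)) = 1 := by
    simpa using dot_eigen hM i i
  have h2 := h _ hvv
  rw [hv, dotProduct_smul, smul_eq_mul, hvv, mul_one] at h2
  exact h2

lemma scalar_ineq (gap yN r c d ξ : ℝ) (hgap : 0 < gap) (hr : 0 ≤ r)
    (hξ : ξ = |yN| + r) (hc : c ^ 2 ≤ 1) (hd : d ^ 2 ≤ r ^ 2 * (1 - c ^ 2)) :
    yN ^ 2 * (gap / (gap + ξ ^ 2)) ≤ gap * (1 - c ^ 2) + (yN * c + d) ^ 2 := by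
  have hp0 : 0 ≤ |yN| := abs_nonneg _
  have hp2 : |yN| ^ 2 = yN ^ 2 := sq_abs _
  set p := |yN| with hp
  set s := Real.sqrt (1 - c ^ 2) with hs
  have hs0 : 0 ≤ s := Real.sqrt_nonneg _
  have hs2 : s ^ 2 = 1 - c ^ 2 := Real.sq_sqrt (by linarith)
  have hden : 0 < gap + ξ ^ 2 := by nlinarith [sq_nonneg ξ]
  have hcc : 1 - s ≤ |c| := by
    rcases le_or_gt 1 s with h | h
    · calc 1 - s ≤ 0 := by linarith
        _ ≤ |c| := abs_nonneg _
    · nlinarith [sq_abs c, abs_nonneg c]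
  have hd' : |d| ≤ r * s := by
    nlinarith [abs_nonneg d, sq_abs d, mul_nonneg hr hs0]
  have hξ0 : 0 ≤ ξ := by rw [hξ]; positivity
  rw [mul_div_assoc', div_le_iff₀ hden]
  rw [← hs2]
  rcases le_or_gt p (s * ξ) with hcase | hcase
  · have h1 : p ^ 2 ≤ s ^ 2 * ξ ^ 2 := by nlinarith [mul_nonneg hs0 hξ0]
    nlinarith [mul_le_mul_of_nonneg_left h1 hgap.le,
      mul_nonneg (sq_nonneg (yN * c + d)) hden.le,
      mul_nonneg (mul_nonneg hgap.le hgap.le) (sq_nonneg s)]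
  · have habs : p - s * ξ ≤ |yN * c + d| := by
      have h1 : p * |c| - |d| ≤ |yN * c + d| := by
        have h2 := abs_add_le (yN * c + d) (-d)
        simp only [add_neg_cancel_right, abs_neg] at h2
        rw [abs_mul] at h2
        linarith
      have h3 : p - s * ξ ≤ p * |c| - r * s := by
        rw [hξ]; nlinarith [hcc, hp0, hr, hs0]
      linarith [hd']
    have h0 : 0 ≤ p - s * ξ := le_of_lt (by linarith)
    have hsq : (p - s * ξ) ^ 2 ≤ (yN * c + d) ^ 2 := by
      nlinarith [sq_abs (yN * c + d), abs_nonneg (yN * c + d)]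
    have key : (gap * s ^ 2 + (p - s * ξ) ^ 2) * (gap + ξ ^ 2) - gap * p ^ 2
        = (s * (gap + ξ ^ 2) - p * ξ) ^ 2 := by ring
    have hmul : (gap * s ^ 2 + (p - s * ξ) ^ 2) * (gap + ξ ^ 2)
        ≤ (gap * s ^ 2 + (yN * c + d) ^ 2) * (gap + ξ ^ 2) :=
      mul_le_mul_of_nonneg_right (by linarith [hsq]) hden.le
    calc yN ^ 2 * gap = gap * p ^ 2 := by rw [← hp2]; ring
      _ ≤ (gap * s ^ 2 + (p - s * ξ) ^ 2) * (gap + ξ ^ 2) := by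
          linarith [sq_nonneg (s * (gap + ξ ^ 2) - p * ξ), key]
      _ ≤ (gap * s ^ 2 + (yN * c + d) ^ 2) * (gap + ξ ^ 2) := hmul

end Aux

set_option maxHeartbeats 1000000 in
/-- rank-one update lower bound for the smallest eigenvalue
(Theorem `l_1`, bound (3.2)). -/
theorem rank_one_update_lower_bound
    {n : ℕ} (hn : 2 ≤ n)
    (A : Matrix (Fin n) (Fin n) ℝ) (hA : A.PosSemidef)
    -- β lists the eigenvalues of A in decreasing order β₁ ≥ ... ≥ β_N
    (β : Fin n → ℝ) (hmono : Antitone β)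
    (hperm : ∃ σ : Equiv.Perm (Fin n), β = hA.isHermitian.eigenvalues ∘ σ)
    -- u_N is a unit eigenvector for the smallest eigenvalue β_N
    (uN : Fin n → ℝ) (hunit : ∑ i, uN i ^ 2 = 1)
    (heig : A.mulVec uN = β ⟨n - 1, by omega⟩ • uN)
    -- y is a nonzero vector
    (y : Fin n → ℝ) (hy : y ≠ 0)
    -- abbreviations
    (yN gap ξ : ℝ)
    (hyN : yN = ∑ i, uN i * y i)
    (hgap : gap = β ⟨n - 2, by omega⟩ - β ⟨n - 1, by omega⟩)
    (hξ : ξ = |yN| + Real.sqrt ((∑ i, y i ^ 2) - yN ^ 2))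
    (hAy : (A + Matrix.vecMulVec y y).IsHermitian) :
    max (β ⟨n - 1, by omega⟩) (yN ^ 2 * (gap / (gap + ξ ^ 2)))
      ≤ smallestEig hAy := by
  obtain ⟨σ, hσ⟩ := hperm
  have hAH := hA.isHermitian
  set μ := hAH.eigenvalues with hμdef
  set V : Fin n → Fin n → ℝ := fun i => ⇑(hAH.eigenvectorBasis i) with hVdef
  set N1 : Fin n := ⟨n - 1, by omega⟩ with hN1
  set N2 : Fin n := ⟨n - 2, by omega⟩ with hN2
  have hβ1 : ∀ j : Fin n, β N1 ≤ β j := fun j => hmono (by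
    rw [Fin.le_def]; exact Nat.le_sub_one_of_lt j.isLt)
  have hμβ : ∀ i, μ i = β (σ⁻¹ i) := fun i => by
    rw [hσ]; simp
  have hμ_ge : ∀ i, β N1 ≤ μ i := fun i => by rw [hμβ]; exact hβ1 _
  have hβN_nonneg : 0 ≤ β N1 := by
    have : β N1 = μ (σ N1) := by rw [hσ]; simp
    rw [this]
    exact hA.eigenvalues_nonneg _
  have hquadM : ∀ x : Fin n → ℝ,
      x ⬝ᵥ ((A + Matrix.vecMulVec y y) *ᵥ x) = x ⬝ᵥ (A *ᵥ x) + (y ⬝ᵥ x) ^ 2 := fun x => by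
    rw [add_mulVec, dotProduct_add, rank_one_quad]
  have hnormx : ∀ x : Fin n → ℝ, x ⬝ᵥ x = ∑ i, (V i ⬝ᵥ x) ^ 2 := fun x => by
    rw [parseval hAH x x]; exact Finset.sum_congr rfl fun i _ => (sq _).symm
  have hgap0 : 0 ≤ gap := by
    rw [hgap]
    have : β N1 ≤ β N2 := hmono (by rw [Fin.le_def]; show n - 2 ≤ n - 1; omega)
    linarith
  refine max_le ?_ ?_
  · -- first bound : β N1 ≤ smallestEig
    refine smallestEig_ge hAy (by omega) _ fun x hx => ?_
    rw [hquadM x]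
    have h1 : β N1 ≤ x ⬝ᵥ (A *ᵥ x) := by
      rw [quad_decomp hAH x]
      have h2 : β N1 = ∑ i, β N1 * (V i ⬝ᵥ x) ^ 2 := by
        rw [← Finset.mul_sum, ← hnormx x, hx, mul_one]
      rw [h2]
      exact Finset.sum_le_sum fun i _ =>
        mul_le_mul_of_nonneg_right (hμ_ge i) (sq_nonneg _)
    nlinarith [sq_nonneg (y ⬝ᵥ x)]
  · -- second bound
    by_cases hdeg : gap = 0 ∨ yN = 0
    · have hzero : yN ^ 2 * (gap / (gap + ξ ^ 2)) = 0 := by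
        rcases hdeg with h | h
        · rw [h, zero_div, mul_zero]
        · rw [h]; ring
      rw [hzero]
      refine smallestEig_ge hAy (by omega) _ fun x hx => ?_
      rw [hquadM x, quad_decomp hAH x]
      have h1 : 0 ≤ ∑ i, μ i * (V i ⬝ᵥ x) ^ 2 :=
        Finset.sum_nonneg fun i _ =>
          mul_nonneg (hA.eigenvalues_nonneg i) (sq_nonneg _)
      nlinarith [sq_nonneg (y ⬝ᵥ x)]
    · push_neg at hdeg
      obtain ⟨hgne, hyNne⟩ := hdeg
      have hgpos : 0 < gap := lt_of_le_of_ne hgap0 (Ne.symm hgne)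
      -- basic vector facts
      have hyN' : yN = uN ⬝ᵥ y := by rw [hyN]; rfl
      have huu : uN ⬝ᵥ uN = 1 := by
        rw [show uN ⬝ᵥ uN = ∑ i, uN i ^ 2 from Finset.sum_congr rfl fun i _ => (sq _).symm, hunit]
      have hyy : (∑ i, y i ^ 2) = y ⬝ᵥ y :=
        Finset.sum_congr rfl fun i _ => sq _
      set y' : Fin n → ℝ := y - yN • uN with hy'def
      have hy'u : uN ⬝ᵥ y' = 0 := by
        rw [hy'def, dotProduct_sub, dotProduct_smul, smul_eq_mul, huu, mul_one, ← hyN']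
        ring
      have hy'y' : y' ⬝ᵥ y' = y ⬝ᵥ y - yN ^ 2 := by
        rw [hy'def]
        simp only [sub_dotProduct, dotProduct_sub, smul_dotProduct, dotProduct_smul, smul_eq_mul]
        rw [huu, dotProduct_comm y uN, ← hyN']
        ring
      have hy'nonneg : 0 ≤ y' ⬝ᵥ y' :=
        Finset.sum_nonneg fun i _ => mul_self_nonneg _
      set r : ℝ := Real.sqrt ((∑ i, y i ^ 2) - yN ^ 2) with hrdef
      have hr2 : r ^ 2 = y ⬝ᵥ y - yN ^ 2 := by
        rw [hrdef, Real.sq_sqrt (by rw [hyy]; linarith [hy'y' ▸ hy'nonneg]), hyy]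
      -- the index i₀
      set i₀ : Fin n := σ N1 with hi₀
      have hμi₀ : μ i₀ = β N1 := by rw [hσ]; simp; rfl
      have hsecond : ∀ i, i ≠ i₀ → β N1 + gap ≤ μ i := by
        intro i hi
        rw [hμβ i]
        have hne : σ⁻¹ i ≠ N1 := by
          intro h
          exact hi (by rw [hi₀, ← h]; simp)
        have hle : σ⁻¹ i ≤ N2 := by
          rw [Fin.le_def]
          have h1 : (σ⁻¹ i : Fin n).1 < n := (σ⁻¹ i).isLt
          have h2 : (σ⁻¹ i : Fin n).1 ≠ n - 1 := fun h => hne (Fin.ext h)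
          simp only [hN2]
          omega
        have := hmono hle
        rw [hgap]
        linarith
      have hb : ∀ i, i ≠ i₀ → (V i ⬝ᵥ uN) = 0 := by
        intro i hi
        have hAT : Aᵀ = A := by
          ext a b
          have := hA.isHermitian
          rw [Matrix.IsHermitian] at this
          have h2 := congrFun (congrFun this a) b
          simpa [Matrix.conjTranspose_apply] using h2
        have h1 : V i ⬝ᵥ (A *ᵥ uN) = β N1 * (V i ⬝ᵥ uN) := by
          rw [heig, dotProduct_smul, smul_eq_mul]
        have h2 : V i ⬝ᵥ (A *ᵥ uN) = μ i * (V i ⬝ᵥ uN) := by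
          rw [dotProduct_mulVec, ← Matrix.mulVec_transpose, hAT,
            hAH.mulVec_eigenvectorBasis, smul_dotProduct, smul_eq_mul]
        have h3 : (μ i - β N1) * (V i ⬝ᵥ uN) = 0 := by linarith [h1, h2]
        rcases mul_eq_zero.mp h3 with h | h
        · exfalso; have := hsecond i hi; nlinarith
        · exact h
      have hbN : (V i₀ ⬝ᵥ uN) ^ 2 = 1 := by
        have hp := parseval hAH uN uN
        rw [Finset.sum_eq_single i₀ (fun i _ hi => by rw [hb i hi]; ring)
          (fun h => absurd (Finset.mem_univ i₀) h)] at hp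
        rw [huu] at hp
        rw [sq]; linarith
      -- now the quadratic form bound
      refine smallestEig_ge hAy (by omega) _ fun x hx => ?_
      rw [hquadM x]
      set a : Fin n → ℝ := fun i => V i ⬝ᵥ x with hadef
      set cx : ℝ := uN ⬝ᵥ x with hcxdef
      have hsum : ∑ i, a i ^ 2 = 1 := by rw [← hnormx x, hx]
      have hcx : cx = (V i₀ ⬝ᵥ uN) * a i₀ := by
        rw [hcxdef, parseval hAH uN x]
        rw [Finset.sum_eq_single i₀ (fun i _ hi => by rw [hb i hi]; ring)
          (fun h => absurd (Finset.mem_univ i₀) h)]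
      have hcx2 : cx ^ 2 = a i₀ ^ 2 := by rw [hcx, mul_pow, hbN, one_mul]
      have hc1 : cx ^ 2 ≤ 1 := by
        rw [hcx2, ← hsum]
        exact Finset.single_le_sum (f := fun i => a i ^ 2)
          (fun i _ => sq_nonneg _) (Finset.mem_univ i₀)
      have hquadA : gap * (1 - cx ^ 2) ≤ x ⬝ᵥ (A *ᵥ x) := by
        rw [quad_decomp hAH x]
        have herase : ∑ i ∈ Finset.univ.erase i₀, a i ^ 2 + a i₀ ^ 2 = 1 := by
          have := Finset.sum_erase_add Finset.univ (fun i => a i ^ 2) (Finset.mem_univ i₀)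
          simpa [hsum] using this
        have h2 : ∑ i ∈ Finset.univ.erase i₀, a i ^ 2 = 1 - cx ^ 2 := by
          rw [hcx2]; linarith
        have h3 : (β N1 + gap) * ∑ i ∈ Finset.univ.erase i₀, a i ^ 2
            ≤ ∑ i ∈ Finset.univ.erase i₀, μ i * a i ^ 2 := by
          rw [Finset.mul_sum]
          exact Finset.sum_le_sum fun i hi =>
            mul_le_mul_of_nonneg_right (hsecond i (Finset.ne_of_mem_erase hi)) (sq_nonneg _)
        have herase2 : ∑ i ∈ Finset.univ.erase i₀, μ i * a i ^ 2 + μ i₀ * a i₀ ^ 2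
            = ∑ i, μ i * a i ^ 2 := by
          simpa using Finset.sum_erase_add Finset.univ (fun i => μ i * a i ^ 2)
            (Finset.mem_univ i₀)
        have h4 : (0:ℝ) ≤ β N1 * a i₀ ^ 2 := mul_nonneg hβN_nonneg (sq_nonneg _)
        calc gap * (1 - cx ^ 2)
            ≤ β N1 * a i₀ ^ 2 + (β N1 + gap) * (1 - cx ^ 2) := by
              have h5 : (0:ℝ) ≤ 1 - cx ^ 2 := by linarith
              nlinarith [mul_nonneg hβN_nonneg (sq_nonneg (a i₀)), mul_nonneg hβN_nonneg h5]
          _ = μ i₀ * a i₀ ^ 2 + (β N1 + gap) * ∑ i ∈ Finset.univ.erase i₀, a i ^ 2 := by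
              rw [hμi₀, h2]
          _ ≤ μ i₀ * a i₀ ^ 2 + ∑ i ∈ Finset.univ.erase i₀, μ i * a i ^ 2 := by linarith [h3]
          _ = ∑ i, μ i * a i ^ 2 := by linarith [herase2]
      set d : ℝ := y' ⬝ᵥ x with hddef
      have hyx : y ⬝ᵥ x = yN * cx + d := by
        rw [hddef, hy'def, sub_dotProduct, smul_dotProduct, smul_eq_mul, hcxdef]
        ring
      have hdCS : d ^ 2 ≤ r ^ 2 * (1 - cx ^ 2) := by
        have hw : (x - cx • uN) ⬝ᵥ (x - cx • uN) = 1 - cx ^ 2 := by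
          simp only [sub_dotProduct, dotProduct_sub, smul_dotProduct, dotProduct_smul, smul_eq_mul]
          rw [huu, hx, dotProduct_comm x uN, ← hcxdef]
          ring
        have hd_eq : d = y' ⬝ᵥ (x - cx • uN) := by
          rw [dotProduct_sub, dotProduct_smul, smul_eq_mul, dotProduct_comm y' uN, hy'u,
            mul_zero, sub_zero, hddef]
        have hCS := Finset.sum_mul_sq_le_sq_mul_sq Finset.univ y' (x - cx • uN)
        have hCS' : (y' ⬝ᵥ (x - cx • uN)) ^ 2 ≤ (y' ⬝ᵥ y') * ((x - cx • uN) ⬝ᵥ (x - cx • uN)) := by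
          have e1 : y' ⬝ᵥ (x - cx • uN) = ∑ i, y' i * (x - cx • uN) i := rfl
          have e2 : y' ⬝ᵥ y' = ∑ i, y' i ^ 2 :=
            Finset.sum_congr rfl fun i _ => (sq _).symm
          have e3 : (x - cx • uN) ⬝ᵥ (x - cx • uN) = ∑ i, (x - cx • uN) i ^ 2 :=
            Finset.sum_congr rfl fun i _ => (sq _).symm
          rw [e1, e2, e3]
          exact hCS
        rw [hd_eq]
        calc (y' ⬝ᵥ (x - cx • uN)) ^ 2
            ≤ (y' ⬝ᵥ y') * ((x - cx • uN) ⬝ᵥ (x - cx • uN)) := hCS'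
          _ = r ^ 2 * (1 - cx ^ 2) := by rw [hw, hy'y', hr2]
      have hfin := scalar_ineq gap yN r cx d ξ hgpos (Real.sqrt_nonneg _) hξ hc1 hdCS
      rw [hyx]
      linarith [hquadA, hfin]
end

section
/- Let H be a continuous positive solution of the Chandrasekhar H-equation at c = 1 with ∫₀¹ H = 2, and define φ(μ) = μ·H(μ). Then φ is in the kernel of the Fréchet derivative G_H(H,1), i.e., φ(μ) - (1/2)·H(μ)²·∫₀¹ μ φ(ν)/(μ+ν) dν = 0 for all μ ∈ [0,1]. -/
open intervalIntegral Set

/-- φ(μ) = μH(μ) lies in the kernel of the Fréchet derivative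
G_H(H,1) of the Chandrasekhar H-equation at the simple fold c = 1:
φ(μ) - (1/2)H(μ)²∫₀¹ μφ(ν)/(μ+ν) dν = 0. -/
theorem h_equation_null_vector
    (H : ℝ → ℝ)
    (hcont : ContinuousOn H (Icc 0 1))
    (hpos : ∀ μ ∈ Icc (0:ℝ) 1, 0 < H μ)
    (heq : ∀ μ ∈ Icc (0:ℝ) 1,
      H μ = 1 + (1/2) * H μ * ∫ ν in (0:ℝ)..1, H ν * μ / (μ + ν))
    (hnorm : (∫ μ in (0:ℝ)..1, H μ) = 2)
    (φ : ℝ → ℝ) (hφ : φ = fun μ => μ * H μ) :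
    ∀ μ ∈ Icc (0:ℝ) 1,
      φ μ - (1/2) * (H μ)^2 * (∫ ν in (0:ℝ)..1, μ * φ ν / (μ + ν)) = 0 := by
  subst hφ
  intro μ hμ
  rcases eq_or_lt_of_le hμ.1 with h0 | h0
  · simp [← h0]
  · have hHμ := hpos μ hμ
    have hI := heq μ hμ
    have huIcc : uIcc (0:ℝ) 1 = Icc 0 1 := uIcc_of_le (by norm_num)
    have hint1 : IntervalIntegrable H MeasureTheory.volume 0 1 := by
      apply ContinuousOn.intervalIntegrable
      rwa [huIcc]
    have hint2 : IntervalIntegrable (fun ν => μ * (H ν * μ / (μ + ν)))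
        MeasureTheory.volume 0 1 := by
      apply ContinuousOn.intervalIntegrable
      rw [huIcc]
      apply ContinuousOn.mul continuousOn_const
      apply ContinuousOn.div (hcont.mul continuousOn_const)
        (continuousOn_const.add (continuousOn_id' _))
      intro ν hν
      have : 0 < μ + ν := by linarith [hν.1]
      exact ne_of_gt this
    have hsplit : (∫ ν in (0:ℝ)..1, μ * (ν * H ν) / (μ + ν))
        = μ * 2 - μ * ∫ ν in (0:ℝ)..1, H ν * μ / (μ + ν) := by
      have hcongr : ∀ ν ∈ uIcc (0:ℝ) 1,
          μ * (ν * H ν) / (μ + ν) = μ * H ν - μ * (H ν * μ / (μ + ν)) := by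
        intro ν hν
        rw [huIcc] at hν
        have hne : μ + ν ≠ 0 := by linarith [hν.1]
        field_simp
        ring
      rw [intervalIntegral.integral_congr hcongr,
        intervalIntegral.integral_sub (hint1.const_mul μ) hint2,
        intervalIntegral.integral_const_mul, intervalIntegral.integral_const_mul,
        hnorm]
    rw [hsplit]
    linear_combination (-(μ * H μ)) * hI
end

section
/- If c > 0, c ≤ 1, and h is a continuous solution of the Chandrasekhar H-equation H(μ) = 1 + (c/2)H(μ)∫₀¹ H(ν)μ/(μ+ν) dν on [0,1], then the L¹ norm ρ = ∫₀¹ h(μ) dμ satisfies ρ = 1 + (c/4)ρ², hence ρ = (1 ± √(1-c))/(c/2). -/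
open intervalIntegral Set MeasureTheory

/-- integrating the Chandrasekhar H-equation over [0,1] yields
ρ = 1 + (c/4)ρ² for ρ = ∫₀¹ h, hence ρ = (1 ± √(1-c))/(c/2). -/
theorem h_equation_norm_quadratic
    (c : ℝ) (hc0 : 0 < c) (hc1 : c ≤ 1)
    (h : ℝ → ℝ)
    (hcont : ContinuousOn h (Icc 0 1))
    (heq : ∀ μ ∈ Icc (0:ℝ) 1,
      h μ = 1 + (c/2) * h μ * ∫ ν in (0:ℝ)..1, h ν * μ / (μ + ν))
    (ρ : ℝ) (hρ : ρ = ∫ μ in (0:ℝ)..1, h μ) :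
    ρ = 1 + (c/4) * ρ^2 ∧
      (ρ = (1 + Real.sqrt (1 - c)) / (c/2) ∨
       ρ = (1 - Real.sqrt (1 - c)) / (c/2)) := by
  set m := volume.restrict (Ioc (0:ℝ) 1) with hm
  set s := (Ioc (0:ℝ) 1) ×ˢ (Ioc (0:ℝ) 1) with hs
  set F : ℝ × ℝ → ℝ := fun p => h p.1 * h p.2 * (p.1 / (p.1 + p.2)) with hF
  have hFc : ContinuousOn F s := by
    apply ContinuousOn.mul
    · exact ((hcont.comp continuous_fst.continuousOn (fun p hp => Ioc_subset_Icc_self hp.1)).mul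
        (hcont.comp continuous_snd.continuousOn (fun p hp => Ioc_subset_Icc_self hp.2)))
    · exact ContinuousOn.div continuous_fst.continuousOn
        (continuous_fst.add continuous_snd).continuousOn
        (fun p hp => ne_of_gt (add_pos hp.1.1 hp.2.1))
  have hprod : m.prod m = volume.restrict s := by
    rw [hm, hs, Measure.prod_restrict, ← Measure.volume_eq_prod]
  obtain ⟨C, hC⟩ := (isCompact_Icc (a := (0:ℝ)) (b := 1)).exists_bound_of_continuousOn hcont
  haveI : IsFiniteMeasure m := ⟨by rw [hm]; simp [Real.volume_Ioc]⟩
  have hFint : Integrable F (m.prod m) := by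
    refine Integrable.mono' (integrable_const (C * C)) ?_ ?_
    · rw [hprod]
      exact (hFc.aestronglyMeasurable (measurableSet_Ioc.prod measurableSet_Ioc))
    · rw [hprod]
      filter_upwards [ae_restrict_mem (measurableSet_Ioc.prod measurableSet_Ioc)] with p hp
      have h1 : ‖h p.1‖ ≤ C := hC _ (Ioc_subset_Icc_self hp.1)
      have h2 : ‖h p.2‖ ≤ C := hC _ (Ioc_subset_Icc_self hp.2)
      have hd : 0 ≤ p.1 / (p.1 + p.2) := div_nonneg hp.1.1.le (add_pos hp.1.1 hp.2.1).le
      have hd1 : p.1 / (p.1 + p.2) ≤ 1 := by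
        rw [div_le_one (add_pos hp.1.1 hp.2.1)]; linarith [hp.2.1.le, hp.2.1]
      have hC0 : 0 ≤ C := le_trans (norm_nonneg _) h1
      calc ‖F p‖ = ‖h p.1‖ * ‖h p.2‖ * ‖p.1 / (p.1+p.2)‖ := by simp [hF, abs_mul]
        _ ≤ C * C * 1 := by
            apply mul_le_mul (mul_le_mul h1 h2 (norm_nonneg _) hC0) _ (norm_nonneg _) (by positivity)
            rw [Real.norm_eq_abs, abs_of_nonneg hd]; exact hd1
        _ = C * C := mul_one _
  set I1 : ℝ := ∫ p, F p ∂(m.prod m) with hI1def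
  -- symmetry: 2 * I1 = ρ²
  have hρm : ρ = ∫ x, h x ∂m := by rw [hρ, intervalIntegral.integral_of_le zero_le_one]
  have hswapint : Integrable (F ∘ Prod.swap) (m.prod m) := hFint.swap
  have hswapeq : ∫ p, F p.swap ∂(m.prod m) = I1 := MeasureTheory.integral_prod_swap F
  have hsum : ∫ p, (F p + F p.swap) ∂(m.prod m) = ρ * ρ := by
    have e1 : ∫ p, (F p + F p.swap) ∂(m.prod m) = ∫ p, h p.1 * h p.2 ∂(m.prod m) := by
      rw [hprod]
      apply MeasureTheory.integral_congr_ae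
      filter_upwards [ae_restrict_mem (measurableSet_Ioc.prod measurableSet_Ioc)] with p hp
      have hne : p.1 + p.2 ≠ 0 := ne_of_gt (add_pos hp.1.1 hp.2.1)
      have hone : p.1/(p.1+p.2) + p.2/(p.1+p.2) = 1 := by
        rw [← add_div, div_self hne]
      simp only [hF, Prod.fst_swap, Prod.snd_swap]
      rw [add_comm p.2 p.1]
      linear_combination (h p.1 * h p.2) * hone
    rw [e1, MeasureTheory.integral_prod_mul, ← hρm]
  have hI : 2 * I1 = ρ ^ 2 := by
    have h5 := integral_add hFint hswapint
    simp only [Function.comp_apply] at h5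
    rw [hsum, hswapeq] at h5
    rw [sq]; linarith
  -- integrate the H-equation
  have hintInt : IntervalIntegrable h volume 0 1 :=
    (hcont.mono (by rw [uIcc_of_le (zero_le_one)])).intervalIntegrable
  have key : ρ - 1 = (c/2) * I1 := by
    have e2 : ∫ μ in (0:ℝ)..1, (h μ - 1) =
        ∫ μ in (0:ℝ)..1, (c/2) * (h μ * ∫ ν in (0:ℝ)..1, h ν * μ/(μ+ν)) := by
      apply intervalIntegral.integral_congr
      intro μ hμ
      rw [uIcc_of_le zero_le_one] at hμ
      have := heq μ hμ
      simp only
      linarith [this]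
    have e1 : ∫ μ in (0:ℝ)..1, (h μ - 1) = ρ - 1 := by
      rw [intervalIntegral.integral_sub hintInt (intervalIntegrable_const), hρ]
      simp
    have e3 : ∫ μ in (0:ℝ)..1, (c/2) * (h μ * ∫ ν in (0:ℝ)..1, h ν * μ/(μ+ν))
        = (c/2) * ∫ μ, (h μ * ∫ ν, h ν * μ/(μ+ν) ∂m) ∂m := by
      rw [intervalIntegral.integral_of_le zero_le_one, MeasureTheory.integral_const_mul]
      congr 1
      apply MeasureTheory.integral_congr_ae
      apply Filter.Eventually.of_forall
      intro μ
      simp only []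
      congr 1
      rw [intervalIntegral.integral_of_le zero_le_one]
    have e4 : ∫ μ, (h μ * ∫ ν, h ν * μ/(μ+ν) ∂m) ∂m = I1 := by
      rw [hI1def, MeasureTheory.integral_prod F hFint]
      apply MeasureTheory.integral_congr_ae
      apply Filter.Eventually.of_forall
      intro μ
      simp only
      rw [← MeasureTheory.integral_const_mul]
      apply MeasureTheory.integral_congr_ae
      apply Filter.Eventually.of_forall
      intro ν
      simp only [hF]
      ring
    rw [← e1, e2, e3, e4]
  have hquad : ρ = 1 + (c/4) * ρ^2 := by linear_combination key + (c/4) * hI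
  refine ⟨hquad, ?_⟩
  set sq := Real.sqrt (1 - c) with hsq
  have hs2 : sq ^ 2 = 1 - c := Real.sq_sqrt (by linarith)
  have hcne : c ≠ 0 := ne_of_gt hc0
  have h0 : (ρ - (1 + sq) / (c/2)) * (ρ - (1 - sq) / (c/2)) = 0 := by
    field_simp
    nlinarith [hquad, hs2]
  rcases mul_eq_zero.mp h0 with h1 | h1
  · exact Or.inl (by linarith [sub_eq_zero.mp h1])
  · exact Or.inr (by linarith [sub_eq_zero.mp h1])
end

section
/- For c > 1 there is no real solution ρ to the equation ρ = 1 + (c/4)ρ². Consequently, for c > 1 the Chandrasekhar H-equation has no real continuous solution. -/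
open intervalIntegral Set MeasureTheory

private lemma quad_no_sol (c : ℝ) (hc : 1 < c) : ∀ ρ : ℝ, ρ ≠ 1 + (c/4) * ρ^2 := by
  intro ρ hρ
  nlinarith [sq_nonneg (c*ρ - 2), sq_nonneg ρ]

/-- for c > 1, the quadratic ρ = 1 + (c/4)ρ² has no real solution,
and consequently the Chandrasekhar H-equation has no real continuous solution. -/
theorem h_equation_no_solution_beyond_fold
    (c : ℝ) (hc : 1 < c) :
    (∀ ρ : ℝ, ρ ≠ 1 + (c/4) * ρ^2) ∧
      ¬ ∃ h : ℝ → ℝ, ContinuousOn h (Icc 0 1) ∧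
        ∀ μ ∈ Icc (0:ℝ) 1,
          h μ = 1 + (c/2) * h μ * ∫ ν in (0:ℝ)..1, h ν * μ / (μ + ν) := by
  refine ⟨quad_no_sol c hc, ?_⟩
  rintro ⟨h, hcont, heq⟩
  -- clamp function
  set φ : ℝ → ℝ := fun x => max 0 (min x 1) with hφdef
  have hφc : Continuous φ := continuous_const.max (continuous_id.min continuous_const)
  have hφmem : ∀ x, φ x ∈ Icc (0:ℝ) 1 := fun x =>
    ⟨le_max_left _ _, max_le zero_le_one (min_le_right x 1)⟩
  have hφid : ∀ x ∈ Icc (0:ℝ) 1, φ x = x := by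
    intro x hx
    simp only [hφdef]
    rw [min_eq_left hx.2, max_eq_right hx.1]
  -- continuous extension
  set H : ℝ → ℝ := fun x => h (φ x) with hHdef
  have hHc : Continuous H := hcont.comp_continuous hφc hφmem
  have hHeq : ∀ x ∈ Icc (0:ℝ) 1, H x = h x := by
    intro x hx; simp only [hHdef, hφid x hx]
  -- uniform bound
  obtain ⟨M, hM⟩ := isCompact_Icc.exists_bound_of_continuousOn hHc.continuousOn
  have hMb : ∀ x, |H x| ≤ M := by
    intro x
    have h1 : H x = H (φ x) := by
      simp only [hHdef, hφid (φ x) (hφmem x)]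
    rw [h1]
    simpa using hM (φ x) (hφmem x)
  -- measures
  set s : Set ℝ := Ioc (0:ℝ) 1 with hsdef
  set m : Measure ℝ := volume.restrict s with hmdef
  have hfin : IsFiniteMeasure m := by
    constructor
    rw [hmdef, Measure.restrict_apply_univ, hsdef]
    simp
  set π : Measure (ℝ × ℝ) := m.prod m with hπdef
  have hπres : π = (volume.prod volume).restrict (s ×ˢ s) := by
    rw [hπdef, hmdef, Measure.prod_restrict]
  -- the kernel functions
  set g1 : ℝ × ℝ → ℝ := fun p => H p.1 * (H p.2 * p.1 / (p.1 + p.2)) with hg1def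
  set g2 : ℝ × ℝ → ℝ := fun p => H p.1 * (H p.2 * p.2 / (p.1 + p.2)) with hg2def
  have hg1m : Measurable g1 := by
    apply ((hHc.measurable.comp measurable_fst)).mul
    exact ((hHc.measurable.comp measurable_snd).mul measurable_fst).div
      (measurable_fst.add measurable_snd)
  have hg2m : Measurable g2 := by
    apply ((hHc.measurable.comp measurable_fst)).mul
    exact ((hHc.measurable.comp measurable_snd).mul measurable_snd).div
      (measurable_fst.add measurable_snd)
  have hMnn : 0 ≤ M := le_trans (abs_nonneg _) (hMb 0)
  -- bounds on s ×ˢ s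
  have hbound : ∀ p ∈ s ×ˢ s, |g1 p| ≤ M * M ∧ |g2 p| ≤ M * M := by
    rintro ⟨x, y⟩ ⟨hx, hy⟩
    have hxy : 0 < x + y := by
      have := hx.1; have := hy.1; linarith
    have hx1 : x / (x + y) ≤ 1 := by
      rw [div_le_one hxy]; linarith [hy.1]
    have hx0 : 0 ≤ x / (x + y) := div_nonneg (le_of_lt hx.1) (le_of_lt hxy)
    have hy1 : y / (x + y) ≤ 1 := by
      rw [div_le_one hxy]; linarith [hx.1]
    have hy0 : 0 ≤ y / (x + y) := div_nonneg (le_of_lt hy.1) (le_of_lt hxy)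
    constructor
    · have : g1 (x, y) = H x * H y * (x / (x + y)) := by
        simp only [hg1def]; ring
      rw [this, abs_mul, abs_mul]
      have : |x / (x + y)| ≤ 1 := abs_le.2 ⟨by linarith, hx1⟩
      calc |H x| * |H y| * |x / (x + y)| ≤ M * M * 1 := by
            apply mul_le_mul (mul_le_mul (hMb x) (hMb y) (abs_nonneg _) hMnn) this
              (abs_nonneg _) (by positivity)
        _ = M * M := mul_one _
    · have : g2 (x, y) = H x * H y * (y / (x + y)) := by
        simp only [hg2def]; ring
      rw [this, abs_mul, abs_mul]
      have : |y / (x + y)| ≤ 1 := abs_le.2 ⟨by linarith, hy1⟩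
      calc |H x| * |H y| * |y / (x + y)| ≤ M * M * 1 := by
            apply mul_le_mul (mul_le_mul (hMb x) (hMb y) (abs_nonneg _) hMnn) this
              (abs_nonneg _) (by positivity)
        _ = M * M := mul_one _
  have hss : MeasurableSet (s ×ˢ s) := measurableSet_Ioc.prod measurableSet_Ioc
  have hae1 : ∀ᵐ p ∂π, ‖g1 p‖ ≤ M * M := by
    rw [hπres, ae_restrict_iff' hss]
    exact ae_of_all _ fun p hp => (hbound p hp).1
  have hae2 : ∀ᵐ p ∂π, ‖g2 p‖ ≤ M * M := by
    rw [hπres, ae_restrict_iff' hss]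
    exact ae_of_all _ fun p hp => (hbound p hp).2
  have hg1i : Integrable g1 π :=
    Integrable.mono' (integrable_const (M * M)) hg1m.aestronglyMeasurable hae1
  have hg2i : Integrable g2 π :=
    Integrable.mono' (integrable_const (M * M)) hg2m.aestronglyMeasurable hae2
  -- sum identity a.e.
  have hsum : ∀ᵐ p ∂π, g1 p + g2 p = H p.1 * H p.2 := by
    rw [hπres, ae_restrict_iff' hss]
    apply ae_of_all
    rintro ⟨x, y⟩ ⟨hx, hy⟩
    have hxy : x + y ≠ 0 := by
      have := hx.1; have := hy.1; positivity
    simp only [hg1def, hg2def]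
    field_simp
  set ρ : ℝ := ∫ x, H x ∂m with hρdef
  have hHi : IntegrableOn H s := by
    exact (hHc.continuousOn.integrableOn_compact isCompact_Icc).mono_set Ioc_subset_Icc_self
  -- A = integral of g1 over product
  set A : ℝ := ∫ p, g1 p ∂π with hAdef
  -- symmetry: ∫ g2 = ∫ g1
  have hswap : ∫ p, g2 p ∂π = A := by
    rw [hAdef, hπdef, ← MeasureTheory.integral_prod_swap g2]
    congr 1
    funext p
    simp only [hg1def, hg2def, Prod.fst_swap, Prod.snd_swap]
    ring
  -- 2A = ρ²
  have h2A : A + A = ρ ^ 2 := by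
    have hsum' : A + ∫ p, g2 p ∂π = ∫ p, H p.1 * H p.2 ∂π := by
      rw [hAdef, ← integral_add hg1i hg2i]
      exact integral_congr_ae hsum
    have hprod : ∫ p, H p.1 * H p.2 ∂π = ρ * ρ := by
      rw [hπdef]
      exact MeasureTheory.integral_prod_mul (μ := m) (ν := m) H H
    rw [← hswap] at *
    nlinarith [hsum', hprod]
  -- pointwise equation in terms of H
  have heq' : ∀ μ ∈ s, H μ = 1 + c/2 * (∫ x, g1 (μ, x) ∂m) := by
    intro μ hμ
    have hμI : μ ∈ Icc (0:ℝ) 1 := Ioc_subset_Icc_self hμ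
    have e1 := heq μ hμI
    have e2 : (∫ ν in (0:ℝ)..1, h ν * μ / (μ + ν)) = ∫ x, H x * μ / (μ + x) ∂m := by
      rw [intervalIntegral.integral_of_le zero_le_one]
      apply setIntegral_congr_fun measurableSet_Ioc
      intro x hx
      simp only [hHeq x (Ioc_subset_Icc_self hx)]
    have e3 : H μ * ∫ x, H x * μ / (μ + x) ∂m = ∫ x, g1 (μ, x) ∂m := by
      rw [← MeasureTheory.integral_const_mul]
    rw [hHeq μ hμI, e1, e2, ← hHeq μ hμI, mul_assoc, e3]
  -- integrate the equation
  have hGi : Integrable (fun μ => ∫ x, g1 (μ, x) ∂m) m := by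
    have := hg1i
    rw [hπdef] at this
    exact this.integral_prod_left
  have hρeq : ρ = 1 + c/4 * ρ ^ 2 := by
    have e4 : ρ = ∫ μ, (1 + c/2 * (∫ x, g1 (μ, x) ∂m)) ∂m := by
      rw [hρdef, hmdef]
      exact setIntegral_congr_fun measurableSet_Ioc heq'
    have e5 : ∫ μ, (1 + c/2 * (∫ x, g1 (μ, x) ∂m)) ∂m
        = (∫ _μ, (1:ℝ) ∂m) + c/2 * ∫ μ, (∫ x, g1 (μ, x) ∂m) ∂m := by
      rw [integral_add (integrable_const 1) (hGi.const_mul (c/2)),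
        MeasureTheory.integral_const_mul]
    have e6 : (∫ _μ, (1:ℝ) ∂m) = 1 := by
      rw [MeasureTheory.integral_const, smul_eq_mul, mul_one, hmdef,
        measureReal_def, Measure.restrict_apply_univ, hsdef, Real.volume_Ioc]
      norm_num
    have e7 : ∫ μ, (∫ x, g1 (μ, x) ∂m) ∂m = A := by
      rw [hAdef, hπdef]
      exact MeasureTheory.integral_integral (f := fun a b => g1 (a, b)) hg1i
    have e8 : ρ = 1 + c/2 * A := by rw [e4, e5, e6, e7]
    have hA : A = ρ ^ 2 / 2 := by linarith
    linear_combination e8 + c/2 * hA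
  exact quad_no_sol c hc ρ hρeq
end
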